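/- arXiv:2509.02937 — 6 statements merged into one kernel-verified Lean document; each statement's English description precedes it below -/
import Mathlib

section
/- Let p be a positive even integer. There exist real coefficients α_{-p/2}, …, α_{p/2} with α_0 = 0 and α_{-j} = -α_j, and a constant c_p > 0 depending only on p, such that for every dimension d ≥ 1, every vector-valued function h : ℝ → ℝ^d that is p times differentiable whose p-th derivative is C-Lipschitz (with the Euclidean norm on ℝ^d), and every ν > 0, it holds that ‖(1/ν) · Σ_{j=-p/2}^{p/2} α_j h(jν) − h'(0)‖ ≤ c_p · C · ν^p, where the norm is the Euclidean norm on ℝ^d. -/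
/-!
Taylor-expand `h` at `0` to order `p`: since only a Lipschitz bound on `h⁽ᵖ⁾` is available, the
remainder bound `C |x|^(p+1)` is proved by induction on `p`, applying the mean value inequality to
the remainder of `h` whose derivative is the remainder of `h'`. The weights `α j = Lⱼ'(0)`, where
`Lⱼ` is the Lagrange basis on the nodes `-p/2, …, p/2`, satisfy `∑ α j q(j) = q'(0)` for every
polynomial `q` of degree `≤ p`; replacing `α j` by `(α j - α (-j)) / 2` keeps this, because
`q ↦ q'(0)` is odd under `q(x) ↦ q(-x)`. Applied to the Taylor polynomial, the stencil returns
exactly `ν h'(0)`, and the remainders contribute at most `∑ |α j| |j|^(p+1) · C ν^(p+1)`.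
-/

open Finset
open scoped Nat

theorem nonneg_of_norm_sub_le_mul_abs {E : Type*} [SeminormedAddGroup E] {f : ℝ → E} {C : ℝ}
    (hf : ∀ u v, ‖f u - f v‖ ≤ C * |u - v|) : 0 ≤ C := by
  simpa using (norm_nonneg _).trans (hf 1 0)

section Taylor

variable {E : Type*} [NormedAddCommGroup E] [NormedSpace ℝ E]

theorem hasDerivAt_pow_succ_div_factorial (i : ℕ) (t : ℝ) :
    HasDerivAt (fun x : ℝ => x ^ (i + 1) / (i + 1)!) (t ^ i / i !) t := by
  have := (hasDerivAt_pow (i + 1) t).div_const ((i + 1)! : ℝ)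
  rw [Nat.factorial_succ, Nat.cast_mul] at this ⊢
  rwa [add_tsub_cancel_right, mul_div_mul_left _ _ (by positivity)] at this

theorem hasDerivAt_sum_pow_div_factorial_smul (T : ℕ → E) (n : ℕ) (t : ℝ) :
    HasDerivAt (fun x : ℝ => ∑ i ∈ range (n + 1), (x ^ i / i !) • T i)
      (∑ i ∈ range n, (t ^ i / i !) • T (i + 1)) t := by
  simp_rw [sum_range_succ' _ n]
  simp only [pow_zero, Nat.factorial_zero, Nat.cast_one, div_one, one_smul]
  exact (HasDerivAt.fun_sum fun i _ =>
    (hasDerivAt_pow_succ_div_factorial i t).smul_const (T (i + 1))).add_const (T 0)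

theorem norm_sub_taylor_le_of_lipschitz_iteratedDeriv (p : ℕ) {f : ℝ → E} {C : ℝ}
    (hdiff : ∀ k < p, Differentiable ℝ (iteratedDeriv k f))
    (hlip : ∀ u v, ‖iteratedDeriv p f u - iteratedDeriv p f v‖ ≤ C * |u - v|) (x : ℝ) :
    ‖f x - ∑ i ∈ range (p + 1), (x ^ i / i !) • iteratedDeriv i f 0‖ ≤ C * |x| ^ (p + 1) := by
  induction p generalizing f x with
  | zero => simpa using hlip x 0
  | succ p ih =>
    have hf : Differentiable ℝ f := by simpa using hdiff 0 p.succ_pos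
    have hderiv_bound (y : ℝ) :
        ‖deriv f y - ∑ i ∈ range (p + 1), (y ^ i / i !) • iteratedDeriv (i + 1) f 0‖ ≤
          C * |y| ^ (p + 1) := by
      simp only [iteratedDeriv_succ'] at hlip ⊢
      exact ih (fun k hk => by simpa [iteratedDeriv_succ'] using hdiff (k + 1) (by omega)) hlip y
    have hderiv (y : ℝ) : HasDerivAt
        (fun z => f z - ∑ i ∈ range (p + 2), (z ^ i / i !) • iteratedDeriv i f 0)
        (deriv f y - ∑ i ∈ range (p + 1), (y ^ i / i !) • iteratedDeriv (i + 1) f 0) y :=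
      (hf y).hasDerivAt.sub (hasDerivAt_sum_pow_div_factorial_smul _ _ y)
    have hmvt := (convex_closedBall (0 : ℝ) |x|).norm_image_sub_le_of_norm_hasDerivWithin_le
      (C := C * |x| ^ (p + 1))
      (fun y _ => (hderiv y).hasDerivWithinAt)
      (fun y hy => (hderiv_bound y).trans <| mul_le_mul_of_nonneg_left
        (pow_le_pow_left₀ (abs_nonneg y) (by simpa using hy) _)
        (nonneg_of_norm_sub_le_mul_abs hlip))
      (Metric.mem_closedBall_self (abs_nonneg x)) (by simp : x ∈ Metric.closedBall (0 : ℝ) |x|)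
    simpa [sum_range_succ' _ (p + 1), pow_succ, mul_assoc] using hmvt

end Taylor

/-- Moment form of: `∑ j ∈ S, α j * q j = q' 0` for every real polynomial `q` of degree `≤ p`. -/
def IsDerivStencil (S : Finset ℤ) (p : ℕ) (α : ℤ → ℝ) : Prop :=
  ∀ i ≤ p, ∑ j ∈ S, α j * (j : ℝ) ^ i = if i = 1 then 1 else 0

open Polynomial in
theorem exists_isDerivStencil (S : Finset ℤ) (p : ℕ) (hp : p < #S) :
    ∃ α, IsDerivStencil S p α := by
  refine ⟨fun j => (Lagrange.basis S (↑) j).derivative.eval 0, fun i hi => ?_⟩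
  have hdeg : ((X : ℝ[X]) ^ i).degree < #S := by
    rw [degree_X_pow]; exact_mod_cast hi.trans_lt hp
  have := congrArg (fun q => q.derivative.eval 0)
    (Lagrange.eq_interpolate Int.cast_injective.injOn hdeg)
  simp only [Lagrange.interpolate_apply, derivative_sum, derivative_C_mul, eval_finsetSum,
    eval_mul, eval_C, eval_pow, eval_X, derivative_X_pow] at this
  refine (sum_congr rfl fun j _ => mul_comm _ _).trans (this.symm.trans ?_)
  rcases Nat.lt_trichotomy i 1 with h | rfl | h
  · simp [Nat.lt_one_iff.mp h]
  · simp
  · simp [h.ne', zero_pow (Nat.sub_ne_zero_of_lt h)]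

theorem IsDerivStencil.antisymmetrize {S : Finset ℤ} {p : ℕ} {α : ℤ → ℝ}
    (hS : ∀ j ∈ S, -j ∈ S) (hα : IsDerivStencil S p α) :
    IsDerivStencil S p (fun j => (α j - α (-j)) / 2) := by
  intro i hi
  have hreflect : ∑ j ∈ S, α (-j) * (j : ℝ) ^ i = (-1) ^ i * ∑ j ∈ S, α j * (j : ℝ) ^ i := by
    rw [mul_sum]
    refine sum_nbij' (fun j => -j) (fun j => -j) hS hS (fun j _ => neg_neg j)
      (fun j _ => neg_neg j) fun j _ => ?_
    push_cast
    rw [neg_pow (j : ℝ), mul_left_comm (α (-j)), ← mul_assoc, ← mul_pow]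
    simp
  simp only [sub_div, sub_mul, sum_sub_distrib, div_mul_eq_mul_div, ← sum_div, hreflect, hα i hi]
  split_ifs with h
  · subst h; norm_num
  · simp

section Error

variable {E : Type*} [NormedAddCommGroup E] [NormedSpace ℝ E]
  {S : Finset ℤ} {p : ℕ} {α : ℤ → ℝ}

theorem IsDerivStencil.sum_smul_taylor (hα : IsDerivStencil S p α) (hp : 1 ≤ p) (T : ℕ → E)
    (ν : ℝ) : ∑ j ∈ S, α j • ∑ i ∈ range (p + 1), (((j : ℝ) * ν) ^ i / i !) • T i = ν • T 1 := by
  calc _ = ∑ i ∈ range (p + 1), (∑ j ∈ S, α j * (j : ℝ) ^ i) • (ν ^ i / i !) • T i := by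
        simp only [smul_sum, smul_smul, sum_mul, sum_smul]
        rw [sum_comm]
        refine sum_congr rfl fun i _ => sum_congr rfl fun j _ => ?_
        rw [mul_pow, mul_div_assoc, mul_assoc]
    _ = ∑ i ∈ range (p + 1), if i = 1 then (ν ^ i / i !) • T i else 0 := by
        refine sum_congr rfl fun i hi => ?_
        rw [hα i (Nat.lt_succ_iff.mp (mem_range.mp hi))]
        split_ifs <;> simp
    _ = ν • T 1 := by simp [Nat.lt_succ_iff.mpr hp]

theorem IsDerivStencil.norm_smul_sum_sub_le (hα : IsDerivStencil S p α) (hp : 1 ≤ p)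
    {f : ℝ → E} {T : ℕ → E} {C : ℝ}
    (hf : ∀ x, ‖f x - ∑ i ∈ range (p + 1), (x ^ i / i !) • T i‖ ≤ C * |x| ^ (p + 1))
    {ν : ℝ} (hν : 0 < ν) :
    ‖(1 / ν) • ∑ j ∈ S, α j • f (j * ν) - T 1‖ ≤
      (∑ j ∈ S, |α j| * |(j : ℝ)| ^ (p + 1)) * C * ν ^ p := by
  have hsplit : (1 / ν) • ∑ j ∈ S, α j • f (j * ν) - T 1 = (1 / ν) • ∑ j ∈ S, α j •
      (f (j * ν) - ∑ i ∈ range (p + 1), (((j : ℝ) * ν) ^ i / i !) • T i) := by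
    rw [sum_congr rfl fun j _ => smul_sub _ _ _, sum_sub_distrib, hα.sum_smul_taylor hp,
      smul_sub, smul_smul, one_div_mul_cancel hν.ne', one_smul]
  rw [hsplit, norm_smul, Real.norm_of_nonneg (by positivity)]
  calc 1 / ν * _ ≤ 1 / ν * ∑ j ∈ S, |α j| * (C * (|(j : ℝ)| * ν) ^ (p + 1)) := by
        gcongr
        refine (norm_sum_le _ _).trans (sum_le_sum fun j _ => ?_)
        rw [norm_smul, Real.norm_eq_abs]
        gcongr
        simpa [abs_mul, abs_of_pos hν] using hf (j * ν)
    _ = _ := by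
        rw [sum_mul, sum_mul, mul_sum]
        refine sum_congr rfl fun j _ => ?_
        field_simp
        ring

end Error

/-- the p-th order central difference error bound (p even) for
vector-valued functions h : ℝ → ℝ^d under the Euclidean norm, with coefficients
independent of h, ν and d. -/
theorem stmt_5 (p : ℕ) (hp : 0 < p) (hpeven : Even p) :
    ∃ (α : ℤ → ℝ) (c : ℝ), 0 < c ∧ α 0 = 0 ∧
      (∀ j : ℤ, 1 ≤ j → j ≤ (p : ℤ) / 2 → α (-j) = -α j) ∧
      ∀ (d : ℕ), 1 ≤ d →
        ∀ (h : ℝ → EuclideanSpace ℝ (Fin d)) (C : ℝ),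
          (∀ k < p, Differentiable ℝ (iteratedDeriv k h)) →
          (∀ u v : ℝ, ‖iteratedDeriv p h u - iteratedDeriv p h v‖ ≤ C * |u - v|) →
          ∀ ν : ℝ, 0 < ν →
            ‖(1 / ν) • ∑ j ∈ Finset.Icc (-((p : ℤ) / 2)) ((p : ℤ) / 2),
                  α j • h ((j : ℝ) * ν) - deriv h 0‖ ≤ c * C * ν ^ p := by
  set S := Icc (-((p : ℤ) / 2)) ((p : ℤ) / 2)
  have hcard : p < #S := by
    obtain ⟨m, rfl⟩ := hpeven
    simp only [S, Int.card_Icc]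
    omega
  obtain ⟨α₀, hα₀⟩ := exists_isDerivStencil S p hcard
  set α : ℤ → ℝ := fun j => (α₀ j - α₀ (-j)) / 2
  have hα : IsDerivStencil S p α :=
    hα₀.antisymmetrize fun j hj => by simp only [S, mem_Icc] at hj ⊢; omega
  refine ⟨α, 1 + ∑ j ∈ S, |α j| * |(j : ℝ)| ^ (p + 1), by positivity, by simp [α],
    fun j _ _ => by simp only [α, neg_neg]; ring, fun d _ h C hdiff hlip ν hν => ?_⟩
  have hC := nonneg_of_norm_sub_le_mul_abs hlip
  rw [← iteratedDeriv_one]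
  calc _ ≤ (∑ j ∈ S, |α j| * |(j : ℝ)| ^ (p + 1)) * C * ν ^ p :=
        hα.norm_smul_sum_sub_le hp
          (norm_sub_taylor_le_of_lipschitz_iteratedDeriv p hdiff hlip) hν
    _ ≤ _ := by gcongr; linarith
end

section
/- Let g : ℝ^d → ℝ be differentiable and μ-strongly convex, i.e., g(y₂) ≥ g(y₁) + ⟨∇g(y₁), y₂ − y₁⟩ + (μ/2)‖y₁ − y₂‖² for all y₁, y₂, and let f : ℝ^d → ℝ be differentiable with L₁-Lipschitz gradient. Then for every ν ∈ ℝ with |ν|·L₁ ≤ μ/2, the perturbed function g_ν := ν f + g is (μ/2)-strongly convex. -/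
/-!
Integrating the Lipschitz bound on `∇f` along the segment from `y₁` to `y₂` shows that `f`
deviates from its linearization at `y₁` by at most `L₁/2 · ‖y₂ - y₁‖²`. Scaled by `ν`, this
costs at most `μ/4 · ‖y₂ - y₁‖²`, half of the quadratic gain that strong convexity gives `g`.
-/

open scoped RealInnerProductSpace

section

variable {E : Type*} [NormedAddCommGroup E] [InnerProductSpace ℝ E] [CompleteSpace E]

theorem inner_gradient_const_mul_add {f g : E → ℝ} {x : E} (hf : DifferentiableAt ℝ f x)
    (hg : DifferentiableAt ℝ g x) (ν : ℝ) (w : E) :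
    ⟪gradient (fun y => ν * f y + g y) x, w⟫ = ν * ⟪gradient f x, w⟫ + ⟪gradient g x, w⟫ := by
  simp only [inner_gradient_left, fderiv_fun_add (hf.const_mul ν) hg, fderiv_const_mul hf,
    add_apply, smul_apply, smul_eq_mul]

theorem abs_sub_sub_inner_gradient_le {f : E → ℝ} {L : ℝ} (hf : Differentiable ℝ f)
    (hlip : ∀ u v, ‖gradient f u - gradient f v‖ ≤ L * ‖u - v‖) (x y : E) :
    |f y - f x - ⟪gradient f x, y - x⟫| ≤ L / 2 * ‖y - x‖ ^ 2 := by
  set v := y - x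
  set φ : ℝ → ℝ := fun t => f (x + t • v) - t * ⟪gradient f x, v⟫
  have hφ : ∀ t, HasDerivAt φ ⟪gradient f (x + t • v) - gradient f x, v⟫ t := by
    intro t
    have hline : HasDerivAt (fun s : ℝ => x + s • v) v t := by
      simpa using ((hasDerivAt_id t).smul_const v).const_add x
    rw [inner_sub_left, inner_gradient_left]
    exact ((hf _).hasFDerivAt.comp_hasDerivAt t hline).sub
      (by simpa using (hasDerivAt_id t).mul_const ⟪gradient f x, v⟫)
  have hbound : ∀ t ∈ Set.Ioo (0 : ℝ) 1, ‖deriv φ t‖ ≤ L * ‖v‖ ^ 2 * t := by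
    intro t ht
    calc ‖deriv φ t‖ = ‖⟪gradient f (x + t • v) - gradient f x, v⟫‖ := by rw [(hφ t).deriv]
      _ ≤ ‖gradient f (x + t • v) - gradient f x‖ * ‖v‖ := norm_inner_le_norm _ _
      _ ≤ L * ‖x + t • v - x‖ * ‖v‖ := by gcongr; exact hlip _ _
      _ = L * ‖v‖ ^ 2 * t := by
        rw [add_sub_cancel_left, norm_smul, Real.norm_of_nonneg ht.1.le]; ring
  calc |f y - f x - ⟪gradient f x, v⟫| = ‖φ 1 - φ 0‖ := by
        simp only [φ, v, one_smul, zero_smul, add_zero, add_sub_cancel, one_mul, zero_mul,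
          sub_zero, Real.norm_eq_abs]
        ring_nf
    _ ≤ ∫ t in (0 : ℝ)..1, L * ‖v‖ ^ 2 * t :=
        norm_sub_le_integral_of_norm_deriv_le_of_le zero_le_one
          (fun t _ => (hφ t).continuousAt.continuousWithinAt)
          (fun t _ => (hφ t).differentiableAt.differentiableWithinAt)
          (.of_forall hbound) ((continuous_const_mul _).intervalIntegrable 0 1)
    _ = L / 2 * ‖v‖ ^ 2 := by
        rw [intervalIntegral.integral_const_mul, integral_id]; ring

end

/-- a small multiple of an L₁-smooth function added to a μ-strongly
convex function stays (μ/2)-strongly convex when |ν|·L₁ ≤ μ/2. -/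
theorem stmt_8 {d : ℕ} (f g : EuclideanSpace ℝ (Fin d) → ℝ) (μ L₁ ν : ℝ)
    (hgdiff : Differentiable ℝ g)
    (hsc : ∀ y₁ y₂, g y₂ ≥ g y₁ + ⟪gradient g y₁, y₂ - y₁⟫ + μ / 2 * ‖y₁ - y₂‖ ^ 2)
    (hfdiff : Differentiable ℝ f)
    (hflip : ∀ u v, ‖gradient f u - gradient f v‖ ≤ L₁ * ‖u - v‖)
    (hν : |ν| * L₁ ≤ μ / 2) :
    ∀ y₁ y₂, ν * f y₂ + g y₂
      ≥ ν * f y₁ + g y₁ + ⟪gradient (fun y => ν * f y + g y) y₁, y₂ - y₁⟫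
        + (μ / 2) / 2 * ‖y₁ - y₂‖ ^ 2 := by
  intro y₁ y₂
  set r := f y₂ - f y₁ - ⟪gradient f y₁, y₂ - y₁⟫
  have hr : |r| ≤ L₁ / 2 * ‖y₁ - y₂‖ ^ 2 :=
    norm_sub_rev y₂ y₁ ▸ abs_sub_sub_inner_gradient_le hfdiff hflip y₁ y₂
  have hνr : |ν * r| ≤ μ / 4 * ‖y₁ - y₂‖ ^ 2 :=
    calc |ν * r| = |ν| * |r| := abs_mul ν r
      _ ≤ |ν| * (L₁ / 2 * ‖y₁ - y₂‖ ^ 2) := by gcongr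
      _ = (|ν| * L₁) / 2 * ‖y₁ - y₂‖ ^ 2 := by ring
      _ ≤ μ / 4 * ‖y₁ - y₂‖ ^ 2 := by gcongr ?_ * _; linarith
  rw [inner_gradient_const_mul_add (hfdiff y₁) (hgdiff y₁)]
  linarith [neg_abs_le (ν * r), hsc y₁ y₂]
end

section
/- Let f, g : ℝ^{d_x} × ℝ^{d_y} → ℝ be differentiable with ∇f and ∇g both L₁-Lipschitz jointly in (x, y), and let g be μ-strongly convex in y. Let 0 ≤ ν ≤ min{1, μ/(2L₁)} and let x₁, x₂ ∈ ℝ^{d_x}. If y₁ minimizes y ↦ ν f(x₁, y) + g(x₁, y) and y₂ minimizes y ↦ ν f(x₂, y) + g(x₂, y), then ‖y₁ − y₂‖ ≤ 4·(L₁/μ)·‖x₁ − x₂‖; that is, the perturbed lower-level solution map x ↦ y_ν*(x) is 4κ-Lipschitz where κ = L₁/μ. -/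
open scoped RealInnerProductSpace

/-- The joint variable (x, y) viewed as an element of ℝ^{dx} × ℝ^{dy} equipped with
the Euclidean (ℓ²) norm. -/
noncomputable def mk2 {dx dy : ℕ} (x : EuclideanSpace ℝ (Fin dx))
    (y : EuclideanSpace ℝ (Fin dy)) :
    WithLp 2 (EuclideanSpace ℝ (Fin dx) × EuclideanSpace ℝ (Fin dy)) :=
  (WithLp.equiv 2 _).symm (x, y)

/-!
The optimality conditions say that `yᵢ` is a zero of the partial gradient
`Aᵢ = ν ∇_y f(xᵢ, ·) + ∇_y g(xᵢ, ·)`. Strong convexity makes `∇_y g(x₁, ·)` `μ`-strongly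
monotone, and `ν ∇_y f(x₁, ·)` is `νL₁ ≤ μ/2`-Lipschitz, so `A₁` is `μ/2`-strongly monotone.
Testing strong monotonicity of `A₁` at `y₁, y₂` and using `A₁ y₁ = 0 = A₂ y₂` gives
`(μ/2) ‖y₁ - y₂‖ ≤ ‖A₁ y₂ - A₂ y₂‖ ≤ (1 + ν) L₁ ‖x₁ - x₂‖ ≤ 2 L₁ ‖x₁ - x₂‖`.
-/

open InnerProductSpace WithLp

namespace WithLp

variable {p : ENNReal} [Fact (1 ≤ p)] {α β : Type*} [SeminormedAddCommGroup α]
  [SeminormedAddCommGroup β]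

lemma norm_toLp_sub_toLp_of_fst_eq (x : α) (y y' : β) :
    ‖toLp p (x, y) - toLp p (x, y')‖ = ‖y - y'‖ := by
  rw [← toLp_sub, Prod.mk_sub_mk, sub_self, norm_toLp_snd]

lemma norm_toLp_sub_toLp_of_snd_eq (x x' : α) (y : β) :
    ‖toLp p (x, y) - toLp p (x', y)‖ = ‖x - x'‖ := by
  rw [← toLp_sub, Prod.mk_sub_mk, sub_self, norm_toLp_fst]

lemma norm_snd_sub_snd_le {γ : Type*} [SeminormedAddCommGroup γ] {Φ : γ → WithLp p (α × β)}
    {L : ℝ} (hΦ : ∀ u v, ‖Φ u - Φ v‖ ≤ L * ‖u - v‖) (u v : γ) :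
    ‖(Φ u).snd - (Φ v).snd‖ ≤ L * ‖u - v‖ :=
  sub_snd (Φ u) (Φ v) ▸ (norm_snd_le α _).trans (hΦ u v)

end WithLp

lemma norm_smul_add_sub_smul_add_le {V : Type*} [SeminormedAddCommGroup V] [NormedSpace ℝ V]
    {c : ℝ} (hc : 0 ≤ c) (a a' b b' : V) :
    ‖(c • a + b) - (c • a' + b')‖ ≤ c * ‖a - a'‖ + ‖b - b'‖ := by
  rw [add_sub_add_comm, ← smul_sub]
  refine (norm_add_le _ _).trans_eq ?_
  rw [norm_smul, Real.norm_of_nonneg hc]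

section Gradient

variable {F : Type*} [NormedAddCommGroup F] [InnerProductSpace ℝ F] [CompleteSpace F]

lemma HasGradientAt.add {φ ψ : F → ℝ} {G H y : F} (hφ : HasGradientAt φ G y)
    (hψ : HasGradientAt ψ H y) : HasGradientAt (fun z => φ z + ψ z) (G + H) y := by
  rw [hasGradientAt_iff_hasFDerivAt, map_add]
  exact hφ.hasFDerivAt.add hψ.hasFDerivAt

lemma HasGradientAt.const_mul {φ : F → ℝ} {G y : F} (c : ℝ) (hφ : HasGradientAt φ G y) :
    HasGradientAt (fun z => c * φ z) (c • G) y := by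
  rw [hasGradientAt_iff_hasFDerivAt, map_smul]
  exact hφ.hasFDerivAt.const_mul c

lemma IsLocalMin.hasGradientAt_eq_zero {φ : F → ℝ} {G y : F} (hmin : IsLocalMin φ y)
    (hG : HasGradientAt φ G y) : G = 0 :=
  (toDual ℝ F).map_eq_zero_iff.mp (hmin.hasFDerivAt_eq_zero hG)

variable {E : Type*} [NormedAddCommGroup E] [InnerProductSpace ℝ E] [CompleteSpace E]

lemma HasGradientAt.comp_toLp_prodMk_right {h : WithLp 2 (E × F) → ℝ} {G : WithLp 2 (E × F)}
    {x : E} {y : F} (hh : HasGradientAt h G (toLp 2 (x, y))) :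
    HasGradientAt (fun y' => h (toLp 2 (x, y'))) G.snd y := by
  have hslice := (prodContinuousLinearEquiv 2 ℝ E F).symm.hasFDerivAt.comp y
    (hasFDerivAt_prodMk_right x y)
  rw [hasGradientAt_iff_hasFDerivAt] at hh ⊢
  refine (hh.comp y hslice).congr_fderiv ?_
  ext v
  simp

end Gradient

section StronglyMonotone

variable {F : Type*} [NormedAddCommGroup F] [InnerProductSpace ℝ F]

def IsStronglyMonotone (m : ℝ) (A : F → F) : Prop :=
  ∀ y₁ y₂, m * ‖y₂ - y₁‖ ^ 2 ≤ ⟪A y₂ - A y₁, y₂ - y₁⟫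

lemma isStronglyMonotone_of_le_add_inner {φ : F → ℝ} {D : F → F} {μ : ℝ}
    (h : ∀ y₁ y₂, φ y₂ ≥ φ y₁ + ⟪D y₁, y₂ - y₁⟫ + μ / 2 * ‖y₁ - y₂‖ ^ 2) :
    IsStronglyMonotone μ D := by
  intro y₁ y₂
  have h₁₂ := h y₁ y₂
  have h₂₁ := h y₂ y₁
  rw [norm_sub_rev] at h₁₂
  rw [← neg_sub y₂ y₁, inner_neg_right] at h₂₁
  rw [inner_sub_left]
  linarith

lemma IsStronglyMonotone.add_of_lipschitz {m K : ℝ} {A B : F → F} (hA : IsStronglyMonotone m A)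
    (hB : ∀ y y', ‖B y - B y'‖ ≤ K * ‖y - y'‖) : IsStronglyMonotone (m - K) (A + B) := by
  intro y₁ y₂
  have hBinner : -(K * ‖y₂ - y₁‖ ^ 2) ≤ ⟪B y₂ - B y₁, y₂ - y₁⟫ := by
    rw [neg_le, ← inner_neg_left, sq, ← mul_assoc]
    refine (real_inner_le_norm _ _).trans (mul_le_mul_of_nonneg_right ?_ (norm_nonneg _))
    rw [norm_neg]
    exact hB y₂ y₁
  have hAinner := hA y₁ y₂
  simp only [Pi.add_apply, add_sub_add_comm, inner_add_left]
  linarith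

lemma IsStronglyMonotone.mul_norm_sub_le {m : ℝ} {A B : F → F} (hA : IsStronglyMonotone m A)
    {y₁ y₂ : F} (hy₁ : A y₁ = 0) (hy₂ : B y₂ = 0) : m * ‖y₁ - y₂‖ ≤ ‖A y₂ - B y₂‖ := by
  rcases (norm_nonneg (y₁ - y₂)).eq_or_lt with hzero | hpos
  · rw [← hzero, mul_zero]
    exact norm_nonneg _
  · refine le_of_mul_le_mul_right ?_ hpos
    calc m * ‖y₁ - y₂‖ * ‖y₁ - y₂‖ = m * ‖y₂ - y₁‖ ^ 2 := by rw [norm_sub_rev]; ring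
      _ ≤ ⟪A y₂ - A y₁, y₂ - y₁⟫ := hA y₁ y₂
      _ = ⟪A y₂ - B y₂, y₂ - y₁⟫ := by rw [hy₁, hy₂]
      _ ≤ ‖A y₂ - B y₂‖ * ‖y₁ - y₂‖ := by rw [norm_sub_rev y₁]; exact real_inner_le_norm _ _

end StronglyMonotone

lemma isStronglyMonotone_snd_gradient {E F : Type*} [NormedAddCommGroup E]
    [InnerProductSpace ℝ E] [CompleteSpace E] [NormedAddCommGroup F] [InnerProductSpace ℝ F]
    [CompleteSpace F] {g : WithLp 2 (E × F) → ℝ} (hg : Differentiable ℝ g) {μ : ℝ} {x : E}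
    (hsc : ∀ y₁ y₂, g (toLp 2 (x, y₂)) ≥ g (toLp 2 (x, y₁))
      + ⟪gradient (fun y => g (toLp 2 (x, y))) y₁, y₂ - y₁⟫ + μ / 2 * ‖y₁ - y₂‖ ^ 2) :
    IsStronglyMonotone μ (fun y => (gradient g (toLp 2 (x, y))).snd) :=
  isStronglyMonotone_of_le_add_inner fun y₁ y₂ => by
    simpa only [((hg _).hasGradientAt.comp_toLp_prodMk_right).gradient] using hsc y₁ y₂

lemma mk2_eq_toLp {dx dy : ℕ} (x : EuclideanSpace ℝ (Fin dx)) (y : EuclideanSpace ℝ (Fin dy)) :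
    mk2 x y = toLp 2 (x, y) :=
  rfl

/-- the perturbed lower-level solution map x ↦ y_ν*(x) is
4κ-Lipschitz, κ = L₁/μ. -/
theorem stmt_10 {dx dy : ℕ}
    (f g : WithLp 2 (EuclideanSpace ℝ (Fin dx) × EuclideanSpace ℝ (Fin dy)) → ℝ)
    (μ L₁ ν : ℝ) (hμ : 0 < μ) (hL₁ : 0 < L₁)
    (hfdiff : Differentiable ℝ f) (hgdiff : Differentiable ℝ g)
    (hflip : ∀ p q, ‖gradient f p - gradient f q‖ ≤ L₁ * ‖p - q‖)
    (hglip : ∀ p q, ‖gradient g p - gradient g q‖ ≤ L₁ * ‖p - q‖)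
    (hsc : ∀ x y₁ y₂, g (mk2 x y₂) ≥ g (mk2 x y₁)
        + ⟪gradient (fun y => g (mk2 x y)) y₁, y₂ - y₁⟫ + μ / 2 * ‖y₁ - y₂‖ ^ 2)
    (hν0 : 0 ≤ ν) (hν1 : ν ≤ min 1 (μ / (2 * L₁)))
    (x₁ x₂ : EuclideanSpace ℝ (Fin dx)) (y₁ y₂ : EuclideanSpace ℝ (Fin dy))
    (hy₁ : ∀ y, ν * f (mk2 x₁ y₁) + g (mk2 x₁ y₁) ≤ ν * f (mk2 x₁ y) + g (mk2 x₁ y))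
    (hy₂ : ∀ y, ν * f (mk2 x₂ y₂) + g (mk2 x₂ y₂) ≤ ν * f (mk2 x₂ y) + g (mk2 x₂ y)) :
    ‖y₁ - y₂‖ ≤ 4 * (L₁ / μ) * ‖x₁ - x₂‖ := by
  have hνL₁ : ν * L₁ ≤ μ / 2 := by
    have := (le_div_iff₀ (by positivity)).mp (hν1.trans (min_le_right _ _))
    linarith
  simp only [mk2_eq_toLp] at hsc hy₁ hy₂
  set A := fun x y => ν • (gradient f (toLp 2 (x, y))).snd + (gradient g (toLp 2 (x, y))).snd
  have hstat : ∀ x y, IsLocalMin (fun y' => ν * f (toLp 2 (x, y')) + g (toLp 2 (x, y'))) y →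
      A x y = 0 := fun x y hmin =>
    hmin.hasGradientAt_eq_zero
      (((hfdiff _).hasGradientAt.const_mul ν).add (hgdiff _).hasGradientAt).comp_toLp_prodMk_right
  have hmono : IsStronglyMonotone (μ - ν * L₁) (A x₁) := by
    rw [show A x₁ = (fun y => (gradient g (toLp 2 (x₁, y))).snd) +
      fun y => ν • (gradient f (toLp 2 (x₁, y))).snd from funext fun _ => add_comm _ _]
    refine (isStronglyMonotone_snd_gradient hgdiff (hsc x₁)).add_of_lipschitz fun y y' => ?_
    rw [← smul_sub, norm_smul, Real.norm_of_nonneg hν0, mul_assoc,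
      ← norm_toLp_sub_toLp_of_fst_eq x₁ y y' (p := 2)]
    exact mul_le_mul_of_nonneg_left (norm_snd_sub_snd_le hflip _ _) hν0
  have hcross : ‖A x₁ y₂ - A x₂ y₂‖ ≤ 2 * L₁ * ‖x₁ - x₂‖ := by
    have hf := norm_snd_sub_snd_le hflip (toLp 2 (x₁, y₂)) (toLp 2 (x₂, y₂))
    have hg := norm_snd_sub_snd_le hglip (toLp 2 (x₁, y₂)) (toLp 2 (x₂, y₂))
    rw [norm_toLp_sub_toLp_of_snd_eq] at hf hg
    refine (norm_smul_add_sub_smul_add_le hν0 _ _ _ _).trans ?_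
    nlinarith [hν1.trans (min_le_left _ _), mul_nonneg hL₁.le (norm_nonneg (x₁ - x₂))]
  have hzeros := hmono.mul_norm_sub_le (hstat x₁ y₁ (.of_forall hy₁)) (hstat x₂ y₂ (.of_forall hy₂))
  have hhalf : μ / 2 * ‖y₁ - y₂‖ ≤ (μ - ν * L₁) * ‖y₁ - y₂‖ := by gcongr; linarith
  rw [mul_div_assoc', div_mul_eq_mul_div, le_div_iff₀ hμ]
  linarith
end

section
/- There exists a universal constant c > 0 with the following property. Let f, g : ℝ^{d_x} × ℝ^{d_y} → ℝ be twice continuously differentiable; let g be μ-strongly convex in y; let f be L₀-Lipschitz in y; let ∇f and ∇g be L₁-Lipschitz jointly in (x, y); and let ∇²_{yy} g and ∇²_{yy} f be L₂-Lipschitz. Set L̄ = max{L₀, L₁, L₂} and κ = L̄/μ. Fix x ∈ ℝ^{d_x}, and for ν ∈ (0, 1/(2κ)] let y_ν*(x) denote the unique minimizer of y ↦ ν f(x, y) + g(x, y), and set H_ν := ν ∇²_{yy} f(x, y_ν*(x)) + ∇²_{yy} g(x, y_ν*(x)). Then for each ν ∈ (0, 1/(2κ)], H_ν is invertible with operator norm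 ‖H_ν^{-1}‖ ≤ 2/μ, and the map ν ↦ H_ν^{-1} is (c·κ²/μ)-Lipschitz in operator norm on (0, 1/(2κ)]. -/
/-!
Write `H ν` for the `y`-Hessian of `ν f + g` at `y*_ν`. Since `∇_y g` is `μ`-strongly monotone and
`∇_y f` is `L₁`-Lipschitz, `ν ∇_y f + ∇_y g` is `(μ - ν L₁)`-strongly monotone, hence so is its
derivative `H ν`; for `ν ≤ 1/(2κ)` this gives `⟪H ν v, v⟫ ≥ μ/2 ‖v‖²`, so `H ν` is invertible with
`‖(H ν)⁻¹‖ ≤ 2/μ`. Comparing the first-order conditions `ν ∇_y f(y*_ν) + ∇_y g(y*_ν) = 0` at two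
parameters through the same strong monotonicity gives `‖y*_ν₁ - y*_ν₂‖ ≤ 2 L₀ |ν₁ - ν₂| / μ`, so
`‖H ν₁ - H ν₂‖ = O(κ² μ |ν₁ - ν₂|)`, and the resolvent identity
`(H ν₁)⁻¹ - (H ν₂)⁻¹ = (H ν₁)⁻¹ (H ν₂ - H ν₁) (H ν₂)⁻¹` finishes the proof.
-/

open scoped RealInnerProductSpace

/-- The Hessian block ∇²_{yy} f(x, y) : ℝ^{dy} →L ℝ^{dy}. -/
noncomputable def Hyy {dx dy : ℕ}
    (f : WithLp 2 (EuclideanSpace ℝ (Fin dx) × EuclideanSpace ℝ (Fin dy)) → ℝ)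
    (x : EuclideanSpace ℝ (Fin dx)) (y : EuclideanSpace ℝ (Fin dy)) :
    EuclideanSpace ℝ (Fin dy) →L[ℝ] EuclideanSpace ℝ (Fin dy) :=
  fderiv ℝ (fun y' => gradient (fun y'' => f (mk2 x y'')) y') y

theorem norm_inverse_sub_inverse_le {R : Type*} [NormedRing R] {a b : R} (ha : IsUnit a)
    (hb : IsUnit b) :
    ‖Ring.inverse a - Ring.inverse b‖ ≤ ‖Ring.inverse a‖ * ‖b - a‖ * ‖Ring.inverse b‖ := by
  rw [Ring.inverse_sub_inverse (iff_of_true ha hb)]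
  exact (norm_mul_le _ _).trans (mul_le_mul_of_nonneg_right (norm_mul_le _ _) (norm_nonneg _))

theorem norm_smul_add_sub_smul_add_le_s11 {V : Type*} [SeminormedAddCommGroup V] [NormedSpace ℝ V]
    (ν₁ ν₂ : ℝ) (A₁ A₂ B₁ B₂ : V) :
    ‖(ν₁ • A₁ + B₁) - (ν₂ • A₂ + B₂)‖ ≤ |ν₁ - ν₂| * ‖A₁‖ + |ν₂| * ‖A₁ - A₂‖ + ‖B₁ - B₂‖ := by
  have h : (ν₁ • A₁ + B₁) - (ν₂ • A₂ + B₂) = (ν₁ - ν₂) • A₁ + ν₂ • (A₁ - A₂) + (B₁ - B₂) := by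
    module
  rw [h, ← Real.norm_eq_abs, ← Real.norm_eq_abs, ← norm_smul, ← norm_smul]
  exact norm_add₃_le

theorem norm_fderiv_le_of_forall_norm_sub_le {V W : Type*} [NormedAddCommGroup V]
    [NormedSpace ℝ V] [NormedAddCommGroup W] [NormedSpace ℝ W] {γ : V → W} {L : ℝ} (hL : 0 ≤ L)
    (hγ : ∀ y z, ‖γ y - γ z‖ ≤ L * ‖y - z‖) (y : V) : ‖fderiv ℝ γ y‖ ≤ L :=
  norm_fderiv_le_of_lip' ℝ hL (Filter.Eventually.of_forall fun z => hγ z y)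

section InnerProductSpace

variable {E : Type*} [NormedAddCommGroup E] [InnerProductSpace ℝ E]

def StronglyMonotone (μ : ℝ) (γ : E → E) : Prop :=
  ∀ y z, μ * ‖y - z‖ ^ 2 ≤ ⟪γ y - γ z, y - z⟫

namespace StronglyMonotone

theorem mono {μ μ' : ℝ} {γ : E → E} (hγ : StronglyMonotone μ γ) (h : μ' ≤ μ) :
    StronglyMonotone μ' γ := fun y z =>
  (mul_le_mul_of_nonneg_right h (sq_nonneg _)).trans (hγ y z)

theorem of_strongConvexity [CompleteSpace E] {μ : ℝ} {G : E → ℝ}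
    (hG : ∀ y₁ y₂, G y₂ ≥ G y₁ + ⟪gradient G y₁, y₂ - y₁⟫ + μ / 2 * ‖y₁ - y₂‖ ^ 2) :
    StronglyMonotone μ (gradient G) := by
  intro y z
  have h₁ := hG y z
  have h₂ := hG z y
  rw [← neg_sub y z, inner_neg_right] at h₁
  rw [norm_sub_rev] at h₂
  rw [inner_sub_left]
  linarith

theorem le_of_lipschitz [Nontrivial E] {μ L : ℝ} {γ : E → E} (hγ : StronglyMonotone μ γ)
    (hL : ∀ y z, ‖γ y - γ z‖ ≤ L * ‖y - z‖) : μ ≤ L := by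
  obtain ⟨v, hv⟩ := exists_ne (0 : E)
  have hv' : 0 < ‖v‖ ^ 2 := by positivity
  have h := hγ v 0
  have h' := (real_inner_le_norm (γ v - γ 0) (v - 0)).trans
    (mul_le_mul_of_nonneg_right (hL v 0) (norm_nonneg _))
  rw [sub_zero] at h h'
  nlinarith

theorem smul_add {μ L ν : ℝ} {a b : E → E} (hb : StronglyMonotone μ b)
    (ha : ∀ y z, ‖a y - a z‖ ≤ L * ‖y - z‖) (hν : 0 ≤ ν) :
    StronglyMonotone (μ - ν * L) (fun y => ν • a y + b y) := by
  intro y z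
  have hab : |⟪a y - a z, y - z⟫| ≤ L * ‖y - z‖ ^ 2 :=
    (abs_real_inner_le_norm _ _).trans
      ((mul_le_mul_of_nonneg_right (ha y z) (norm_nonneg _)).trans_eq (by ring))
  have hsplit : ⟪(ν • a y + b y) - (ν • a z + b z), y - z⟫
      = ν * ⟪a y - a z, y - z⟫ + ⟪b y - b z, y - z⟫ := by
    rw [add_sub_add_comm, ← smul_sub, inner_add_left, real_inner_smul_left]
  rw [hsplit]
  nlinarith [hb y z, mul_le_mul_of_nonneg_left (neg_abs_le ⟪a y - a z, y - z⟫) hν]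

theorem norm_sub_le_of_smul_add_eq_zero {μ L₀ L₁ ν₁ ν₂ : ℝ} {a b : E → E} {y₁ y₂ : E}
    (hb : StronglyMonotone μ b) (ha₀ : ∀ y, ‖a y‖ ≤ L₀)
    (ha₁ : ∀ y z, ‖a y - a z‖ ≤ L₁ * ‖y - z‖) (hν₂ : 0 ≤ ν₂) (hν₂L : ν₂ * L₁ ≤ μ / 2)
    (h₁ : ν₁ • a y₁ + b y₁ = 0) (h₂ : ν₂ • a y₂ + b y₂ = 0) :
    μ * ‖y₁ - y₂‖ ≤ 2 * L₀ * |ν₁ - ν₂| := by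
  -- `ν₂ • a + b` is still `μ / 2`-strongly monotone and vanishes at `y₂`
  have hmono := (hb.smul_add ha₁ hν₂).mono (show μ / 2 ≤ μ - ν₂ * L₁ by linarith) y₁ y₂
  have hy₁ : ν₂ • a y₁ + b y₁ = (ν₂ - ν₁) • a y₁ := by
    rw [sub_smul, eq_sub_iff_add_eq, add_right_comm, add_assoc, h₁, add_zero]
  rw [hy₁, h₂, sub_zero, real_inner_smul_left] at hmono
  have hinner : (ν₂ - ν₁) * ⟪a y₁, y₁ - y₂⟫ ≤ |ν₁ - ν₂| * (L₀ * ‖y₁ - y₂‖) := by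
    rw [← abs_sub_comm]
    refine (le_abs_self _).trans ?_
    rw [abs_mul]
    exact mul_le_mul_of_nonneg_left ((abs_real_inner_le_norm _ _).trans
      (mul_le_mul_of_nonneg_right (ha₀ y₁) (norm_nonneg _))) (abs_nonneg _)
  rcases (norm_nonneg (y₁ - y₂)).eq_or_lt with hd | hd
  · rw [← hd, mul_zero]
    have := (norm_nonneg _).trans (ha₀ y₁)
    positivity
  · nlinarith

end StronglyMonotone

theorem ContinuousLinearMap.stronglyMonotone_iff {μ : ℝ} {T : E →L[ℝ] E} :
    StronglyMonotone μ T ↔ ∀ v, μ * ‖v‖ ^ 2 ≤ ⟪T v, v⟫ := by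
  refine ⟨fun h v => by simpa using h v 0, fun h y z => ?_⟩
  rw [← map_sub]
  exact h (y - z)

theorem StronglyMonotone.fderiv {μ : ℝ} {γ : E → E} {D : E →L[ℝ] E} {y : E}
    (hγ : StronglyMonotone μ γ) (hD : HasFDerivAt γ D y) : StronglyMonotone μ D := by
  refine ContinuousLinearMap.stronglyMonotone_iff.2 fun v => ?_
  have hline : HasDerivAt (fun t : ℝ => γ (y + t • v)) (D v) 0 := by
    have h := ((hasDerivAt_id (0 : ℝ)).smul_const v).const_add y
    rw [one_smul] at h
    exact (by simpa using hD : HasFDerivAt γ D (y + (0 : ℝ) • v)).comp_hasDerivAt 0 h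
  have hslope : Filter.Tendsto (fun t => ⟪slope (fun t : ℝ => γ (y + t • v)) 0 t, v⟫)
      (nhdsWithin 0 (Set.Ioi 0)) (nhds ⟪D v, v⟫) :=
    ((hasDerivAt_iff_tendsto_slope.1 hline).mono_left
      (nhdsWithin_mono 0 fun t ht => ne_of_gt ht)).inner tendsto_const_nhds
  refine ge_of_tendsto hslope ?_
  filter_upwards [self_mem_nhdsWithin] with t (ht : (0 : ℝ) < t)
  have key := hγ (y + t • v) y
  rw [add_sub_cancel_left, norm_smul, Real.norm_eq_abs, abs_of_pos ht, real_inner_smul_right]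
    at key
  rw [slope_def_module, zero_smul, add_zero, sub_zero, real_inner_smul_left, inv_mul_eq_div,
    le_div_iff₀ ht]
  nlinarith

variable [CompleteSpace E]

theorem ContinuousLinearMap.isUnit_and_norm_inverse_le {c : ℝ} {T : E →L[ℝ] E} (hc : 0 < c)
    (hT : StronglyMonotone c T) : IsUnit T ∧ ‖Ring.inverse T‖ ≤ c⁻¹ := by
  have h : ∀ v, ‖v‖ ^ 2 * c.toNNReal ≤ ‖⟪T v, v⟫‖ := fun v => by
    rw [Real.coe_toNNReal _ hc.le, mul_comm]
    exact (stronglyMonotone_iff.1 hT v).trans (Real.le_norm_self _)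
  have hT' : IsUnit T := isUnit_of_forall_le_norm_inner_map T (by simpa using hc) h
  refine ⟨hT', opNorm_le_bound _ (by positivity) fun w => ?_⟩
  have hbound := bound_of_antilipschitz T
    (antilipschitz_of_forall_le_inner_map T (by simpa using hc) h) (Ring.inverse T w)
  rwa [← mul_apply_eq_comp, Ring.mul_inverse_cancel T hT', one_apply_eq_self, NNReal.coe_inv,
    Real.coe_toNNReal _ hc.le] at hbound

theorem smul_gradient_add_gradient_eq_zero {F G : E → ℝ} {ν : ℝ} {y : E}
    (hF : DifferentiableAt ℝ F y) (hG : DifferentiableAt ℝ G y)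
    (hmin : ∀ z, ν * F y + G y ≤ ν * F z + G z) :
    ν • gradient F y + gradient G y = 0 := by
  have h := IsLocalMin.hasFDerivAt_eq_zero (Filter.Eventually.of_forall hmin)
    ((hF.hasFDerivAt.const_mul ν).add hG.hasFDerivAt)
  simp only [gradient, ← map_smul, ← map_add, h, map_zero]

theorem ContDiff.differentiable_gradient {F : E → ℝ} (hF : ContDiff ℝ 2 F) :
    Differentiable ℝ (gradient F) :=
  (InnerProductSpace.toDual ℝ E).symm.toContinuousLinearEquiv.differentiable.comp
    ((hF.fderiv_right (m := 1) le_rfl).differentiable one_ne_zero)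

theorem norm_gradient_le_of_lipschitz {F : E → ℝ} {L : ℝ} (hL₀ : 0 ≤ L)
    (hL : ∀ y z, |F y - F z| ≤ L * ‖y - z‖) (y : E) : ‖gradient F y‖ ≤ L := by
  rw [gradient, LinearIsometryEquiv.norm_map]
  exact norm_fderiv_le_of_lip' ℝ hL₀ (Filter.Eventually.of_forall fun z => hL z y)

theorem norm_gradient_sub_gradient (F : E → ℝ) (y z : E) :
    ‖gradient F y - gradient F z‖ = ‖fderiv ℝ F y - fderiv ℝ F z‖ := by
  rw [gradient, gradient, ← map_sub, LinearIsometryEquiv.norm_map]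

variable {F G : E → ℝ}

theorem isUnit_and_norm_inverse_hessian_le {μ L ν : ℝ} (hμ : 0 < μ) (hL : 0 ≤ L)
    (hG : ContDiff ℝ 2 G) (hGmono : StronglyMonotone μ (gradient G))
    (hF₁ : ∀ y z, ‖gradient F y - gradient F z‖ ≤ L * ‖y - z‖)
    (hν : 0 ≤ ν) (hνL : ν * L ≤ μ / 2) (y : E) :
    IsUnit (ν • fderiv ℝ (gradient F) y + fderiv ℝ (gradient G) y) ∧
      ‖Ring.inverse (ν • fderiv ℝ (gradient F) y + fderiv ℝ (gradient G) y)‖ ≤ 2 / μ := by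
  have hA : ∀ v w, ‖fderiv ℝ (gradient F) y v - fderiv ℝ (gradient F) y w‖ ≤ L * ‖v - w‖ :=
    fun v w => by
      rw [← map_sub]
      exact (fderiv ℝ (gradient F) y).le_of_opNorm_le
        (norm_fderiv_le_of_forall_norm_sub_le hL hF₁ y) _
  have hB : StronglyMonotone μ (fderiv ℝ (gradient G) y) :=
    hGmono.fderiv (hG.differentiable_gradient y).hasFDerivAt
  have hH := (hB.smul_add hA hν).mono (show μ / 2 ≤ μ - ν * L by linarith)
  simpa using ContinuousLinearMap.isUnit_and_norm_inverse_le (half_pos hμ) hH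

theorem norm_hessian_sub_le {μ L₁ L₂ κ ν₁ ν₂ : ℝ} {y₁ y₂ : E} (hμ : 0 < μ) (hκ : 1 ≤ κ)
    (hL₁ : 0 ≤ L₁) (hκ₁ : L₁ ≤ κ * μ) (hκ₂ : L₂ ≤ κ * μ)
    (hF₁ : ∀ y z, ‖gradient F y - gradient F z‖ ≤ L₁ * ‖y - z‖)
    (hF₂ : ∀ y z, ‖fderiv ℝ (gradient F) y - fderiv ℝ (gradient F) z‖ ≤ L₂ * ‖y - z‖)
    (hG₂ : ∀ y z, ‖fderiv ℝ (gradient G) y - fderiv ℝ (gradient G) z‖ ≤ L₂ * ‖y - z‖)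
    (hν₂ : 0 ≤ ν₂) (hν₂κ : 2 * ν₂ * κ ≤ 1) (hy : μ * ‖y₁ - y₂‖ ≤ 2 * (κ * μ) * |ν₁ - ν₂|) :
    ‖(ν₁ • fderiv ℝ (gradient F) y₁ + fderiv ℝ (gradient G) y₁)
        - (ν₂ • fderiv ℝ (gradient F) y₂ + fderiv ℝ (gradient G) y₂)‖
      ≤ 4 * κ ^ 2 * μ * |ν₁ - ν₂| := by
  have hd : L₂ * ‖y₁ - y₂‖ ≤ 2 * κ ^ 2 * μ * |ν₁ - ν₂| :=
    calc L₂ * ‖y₁ - y₂‖ ≤ κ * (μ * ‖y₁ - y₂‖) := by rw [← mul_assoc]; gcongr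
      _ ≤ κ * (2 * (κ * μ) * |ν₁ - ν₂|) := mul_le_mul_of_nonneg_left hy (by positivity)
      _ = 2 * κ ^ 2 * μ * |ν₁ - ν₂| := by ring
  have hκμ : κ * μ * |ν₁ - ν₂| ≤ κ ^ 2 * μ * |ν₁ - ν₂| := by
    gcongr
    exact le_self_pow₀ hκ two_ne_zero
  have hν₂half : ν₂ ≤ 1 / 2 := by nlinarith
  calc _ ≤ |ν₁ - ν₂| * ‖fderiv ℝ (gradient F) y₁‖
          + |ν₂| * ‖fderiv ℝ (gradient F) y₁ - fderiv ℝ (gradient F) y₂‖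
          + ‖fderiv ℝ (gradient G) y₁ - fderiv ℝ (gradient G) y₂‖ :=
        norm_smul_add_sub_smul_add_le_s11 _ _ _ _ _ _
    _ ≤ |ν₁ - ν₂| * (κ * μ) + ν₂ * (L₂ * ‖y₁ - y₂‖) + L₂ * ‖y₁ - y₂‖ := by
        rw [abs_of_nonneg hν₂]
        gcongr
        exacts [(norm_fderiv_le_of_forall_norm_sub_le hL₁ hF₁ y₁).trans hκ₁, hF₂ y₁ y₂,
          hG₂ y₁ y₂]
    _ ≤ 4 * κ ^ 2 * μ * |ν₁ - ν₂| := by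
        have hK : 0 ≤ 2 * κ ^ 2 * μ * |ν₁ - ν₂| := by positivity
        nlinarith [mul_le_mul_of_nonneg_left hd hν₂, mul_le_mul_of_nonneg_right hν₂half hK]

theorem norm_inverse_hessian_sub_le {μ L₀ L₁ L₂ κ ν₁ ν₂ : ℝ} {y₁ y₂ : E} (hμ : 0 < μ)
    (hL₀ : 0 ≤ L₀) (hL₁ : 0 ≤ L₁) (hκ₀ : L₀ ≤ κ * μ) (hκ₁ : L₁ ≤ κ * μ) (hκ₂ : L₂ ≤ κ * μ)
    (hF : ContDiff ℝ 2 F) (hG : ContDiff ℝ 2 G) (hGmono : StronglyMonotone μ (gradient G))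
    (hF₀ : ∀ y z, |F y - F z| ≤ L₀ * ‖y - z‖)
    (hF₁ : ∀ y z, ‖gradient F y - gradient F z‖ ≤ L₁ * ‖y - z‖)
    (hG₁ : ∀ y z, ‖gradient G y - gradient G z‖ ≤ L₁ * ‖y - z‖)
    (hF₂ : ∀ y z, ‖fderiv ℝ (gradient F) y - fderiv ℝ (gradient F) z‖ ≤ L₂ * ‖y - z‖)
    (hG₂ : ∀ y z, ‖fderiv ℝ (gradient G) y - fderiv ℝ (gradient G) z‖ ≤ L₂ * ‖y - z‖)
    (hν₁ : 0 ≤ ν₁) (hν₁κ : 2 * ν₁ * κ ≤ 1) (hν₂ : 0 ≤ ν₂) (hν₂κ : 2 * ν₂ * κ ≤ 1)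
    (hmin₁ : ∀ y, ν₁ * F y₁ + G y₁ ≤ ν₁ * F y + G y)
    (hmin₂ : ∀ y, ν₂ * F y₂ + G y₂ ≤ ν₂ * F y + G y) :
    ‖Ring.inverse (ν₁ • fderiv ℝ (gradient F) y₁ + fderiv ℝ (gradient G) y₁)
        - Ring.inverse (ν₂ • fderiv ℝ (gradient F) y₂ + fderiv ℝ (gradient G) y₂)‖
      ≤ 16 * κ ^ 2 / μ * |ν₁ - ν₂| := by
  have hν₁L : ν₁ * L₁ ≤ μ / 2 := by nlinarith
  have hν₂L : ν₂ * L₁ ≤ μ / 2 := by nlinarith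
  obtain ⟨hu₁, hn₁⟩ := isUnit_and_norm_inverse_hessian_le hμ hL₁ hG hGmono hF₁ hν₁ hν₁L y₁
  obtain ⟨hu₂, hn₂⟩ := isUnit_and_norm_inverse_hessian_le hμ hL₁ hG hGmono hF₁ hν₂ hν₂L y₂
  rcases subsingleton_or_nontrivial E with hE | hE
  · rw [Subsingleton.elim (Ring.inverse _) (Ring.inverse _), sub_self, norm_zero]
    positivity
  -- `κ ≥ 1` because `∇G` is both `μ`-strongly monotone and `L₁`-Lipschitz on `E ≠ 0`
  have hκ : 1 ≤ κ := by nlinarith [hGmono.le_of_lipschitz hG₁]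
  have hdF := hF.differentiable two_ne_zero
  have hdG := hG.differentiable two_ne_zero
  have hy : μ * ‖y₁ - y₂‖ ≤ 2 * L₀ * |ν₁ - ν₂| :=
    hGmono.norm_sub_le_of_smul_add_eq_zero (norm_gradient_le_of_lipschitz hL₀ hF₀) hF₁ hν₂ hν₂L
      (smul_gradient_add_gradient_eq_zero (hdF y₁) (hdG y₁) hmin₁)
      (smul_gradient_add_gradient_eq_zero (hdF y₂) (hdG y₂) hmin₂)
  have hH := norm_hessian_sub_le hμ hκ hL₁ hκ₁ hκ₂ hF₁ hF₂ hG₂ hν₂ hν₂κ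
    (hy.trans (by gcongr))
  calc _ ≤ _ := norm_inverse_sub_inverse_le hu₁ hu₂
    _ ≤ 2 / μ * (4 * κ ^ 2 * μ * |ν₁ - ν₂|) * (2 / μ) := by
        rw [norm_sub_rev] at hH
        gcongr
    _ = 16 * κ ^ 2 / μ * |ν₁ - ν₂| := by field_simp; ring

end InnerProductSpace

section PartialMap

variable {dx dy : ℕ}

noncomputable def mk2Right (dx dy : ℕ) : EuclideanSpace ℝ (Fin dy) →L[ℝ]
    WithLp 2 (EuclideanSpace ℝ (Fin dx) × EuclideanSpace ℝ (Fin dy)) :=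
  (WithLp.prodContinuousLinearEquiv 2 ℝ _ _).symm.toContinuousLinearMap.comp
    (ContinuousLinearMap.inr ℝ _ _)

theorem mk2_eq_add (x : EuclideanSpace ℝ (Fin dx)) (y : EuclideanSpace ℝ (Fin dy)) :
    mk2 x y = mk2 x 0 + mk2Right dx dy y := by
  simp [mk2, mk2Right, ← WithLp.toLp_add]

theorem norm_mk2_sub_mk2 (x : EuclideanSpace ℝ (Fin dx)) (y z : EuclideanSpace ℝ (Fin dy)) :
    ‖mk2 x y - mk2 x z‖ = ‖y - z‖ := by
  simp [mk2, ← WithLp.toLp_sub]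

theorem norm_mk2Right_le : ‖mk2Right dx dy‖ ≤ 1 :=
  ContinuousLinearMap.opNorm_le_bound _ zero_le_one fun v => by simp [mk2Right]

theorem hasFDerivAt_mk2 (x : EuclideanSpace ℝ (Fin dx)) (y : EuclideanSpace ℝ (Fin dy)) :
    HasFDerivAt (mk2 x) (mk2Right dx dy) y := by
  rw [show mk2 x = fun y => mk2 x 0 + mk2Right dx dy y from funext (mk2_eq_add x)]
  exact (mk2Right dx dy).hasFDerivAt.const_add _

variable {f : WithLp 2 (EuclideanSpace ℝ (Fin dx) × EuclideanSpace ℝ (Fin dy)) → ℝ}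

theorem ContDiff.comp_mk2 {n : WithTop ℕ∞} (hf : ContDiff ℝ n f)
    (x : EuclideanSpace ℝ (Fin dx)) : ContDiff ℝ n (fun y => f (mk2 x y)) := by
  rw [show (fun y => f (mk2 x y)) = fun y => f (mk2 x 0 + mk2Right dx dy y) from
    funext fun y => congrArg f (mk2_eq_add x y)]
  exact hf.comp (contDiff_const.add (mk2Right dx dy).contDiff)

theorem norm_gradient_comp_mk2_sub_le (hf : Differentiable ℝ f) {L : ℝ}
    (hL : ∀ p q, ‖gradient f p - gradient f q‖ ≤ L * ‖p - q‖) (x : EuclideanSpace ℝ (Fin dx))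
    (y z : EuclideanSpace ℝ (Fin dy)) :
    ‖gradient (fun y => f (mk2 x y)) y - gradient (fun y => f (mk2 x y)) z‖ ≤ L * ‖y - z‖ := by
  have hchain : ∀ y,
      fderiv ℝ (fun y => f (mk2 x y)) y = (fderiv ℝ f (mk2 x y)).comp (mk2Right dx dy) :=
    fun y => ((hf _).hasFDerivAt.comp y (hasFDerivAt_mk2 x y)).fderiv
  rw [norm_gradient_sub_gradient, hchain, hchain, ← ContinuousLinearMap.sub_comp]
  calc _ ≤ ‖fderiv ℝ f (mk2 x y) - fderiv ℝ f (mk2 x z)‖ * ‖mk2Right dx dy‖ :=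
        ContinuousLinearMap.opNorm_comp_le _ _
    _ ≤ ‖fderiv ℝ f (mk2 x y) - fderiv ℝ f (mk2 x z)‖ :=
        mul_le_of_le_one_right (norm_nonneg _) norm_mk2Right_le
    _ = ‖gradient f (mk2 x y) - gradient f (mk2 x z)‖ := (norm_gradient_sub_gradient f _ _).symm
    _ ≤ L * ‖y - z‖ := (hL _ _).trans_eq (by rw [norm_mk2_sub_mk2])

end PartialMap

/-- H_ν = ν ∇²_{yy} f(x, y_ν*(x)) + ∇²_{yy} g(x, y_ν*(x)) is invertible
with ‖H_ν^{-1}‖ ≤ 2/μ, and ν ↦ H_ν^{-1} is (cκ²/μ)-Lipschitz on (0, 1/(2κ)]. -/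
theorem stmt_11 :
    ∃ c : ℝ, 0 < c ∧
      ∀ (dx dy : ℕ) (μ L₀ L₁ L₂ : ℝ), 0 < μ → 0 < L₀ → 0 < L₁ → 0 < L₂ →
      ∀ (f g : WithLp 2 (EuclideanSpace ℝ (Fin dx) × EuclideanSpace ℝ (Fin dy)) → ℝ),
        ContDiff ℝ 2 f → ContDiff ℝ 2 g →
        (∀ x y₁ y₂, g (mk2 x y₂) ≥ g (mk2 x y₁)
            + ⟪gradient (fun y => g (mk2 x y)) y₁, y₂ - y₁⟫ + μ / 2 * ‖y₁ - y₂‖ ^ 2) →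
        (∀ x y₁ y₂, |f (mk2 x y₁) - f (mk2 x y₂)| ≤ L₀ * ‖y₁ - y₂‖) →
        (∀ p q, ‖gradient f p - gradient f q‖ ≤ L₁ * ‖p - q‖) →
        (∀ p q, ‖gradient g p - gradient g q‖ ≤ L₁ * ‖p - q‖) →
        (∀ x y x' y', ‖Hyy g x y - Hyy g x' y'‖ ≤ L₂ * ‖mk2 x y - mk2 x' y'‖) →
        (∀ x y x' y', ‖Hyy f x y - Hyy f x' y'‖ ≤ L₂ * ‖mk2 x y - mk2 x' y'‖) →
        ∀ Lbar κ : ℝ, Lbar = max L₀ (max L₁ L₂) → κ = Lbar / μ →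
        ∀ (x : EuclideanSpace ℝ (Fin dx)) (ystar : ℝ → EuclideanSpace ℝ (Fin dy)),
          (∀ ν ∈ Set.Ioc (0 : ℝ) (1 / (2 * κ)), ∀ y,
            ν * f (mk2 x (ystar ν)) + g (mk2 x (ystar ν))
              ≤ ν * f (mk2 x y) + g (mk2 x y)) →
          ∃ Hinv : ℝ → (EuclideanSpace ℝ (Fin dy) →L[ℝ] EuclideanSpace ℝ (Fin dy)),
            (∀ ν ∈ Set.Ioc (0 : ℝ) (1 / (2 * κ)),
              (ν • Hyy f x (ystar ν) + Hyy g x (ystar ν)).comp (Hinv ν)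
                  = ContinuousLinearMap.id ℝ _ ∧
                (Hinv ν).comp (ν • Hyy f x (ystar ν) + Hyy g x (ystar ν))
                  = ContinuousLinearMap.id ℝ _ ∧
                ‖Hinv ν‖ ≤ 2 / μ) ∧
            (∀ ν₁ ∈ Set.Ioc (0 : ℝ) (1 / (2 * κ)), ∀ ν₂ ∈ Set.Ioc (0 : ℝ) (1 / (2 * κ)),
              ‖Hinv ν₁ - Hinv ν₂‖ ≤ c * κ ^ 2 / μ * |ν₁ - ν₂|) := by
  refine ⟨16, by norm_num, ?_⟩
  intro dx dy μ L₀ L₁ L₂ hμ hL₀ hL₁ _ f g hf hg hsc hflip hgf hgg hHg hHf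
    Lbar κ hLbar hκ x ystar hmin
  have hκμ : Lbar = κ * μ := by rw [hκ, div_mul_cancel₀ _ hμ.ne']
  have hκ₀ : L₀ ≤ κ * μ := hκμ ▸ hLbar ▸ le_max_left _ _
  have hκ₁ : L₁ ≤ κ * μ := hκμ ▸ hLbar ▸ (le_max_left _ _).trans (le_max_right _ _)
  have hκ₂ : L₂ ≤ κ * μ := hκμ ▸ hLbar ▸ (le_max_right _ _).trans (le_max_right _ _)
  have hI : ∀ ν ∈ Set.Ioc (0 : ℝ) (1 / (2 * κ)), 0 ≤ ν ∧ 2 * ν * κ ≤ 1 := fun ν hν => by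
    have hκpos : 0 < κ := by nlinarith
    refine ⟨hν.1.le, ?_⟩
    have := hν.2
    rw [le_div_iff₀ (by positivity)] at this
    linarith
  have hG := hg.comp_mk2 x
  have hGmono := StronglyMonotone.of_strongConvexity (hsc x)
  have hF₁ := norm_gradient_comp_mk2_sub_le (hf.differentiable two_ne_zero) hgf x
  have hG₁ := norm_gradient_comp_mk2_sub_le (hg.differentiable two_ne_zero) hgg x
  refine ⟨fun ν => Ring.inverse (ν • Hyy f x (ystar ν) + Hyy g x (ystar ν)), fun ν hν => ?_,
    fun ν₁ hν₁ ν₂ hν₂ => ?_⟩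
  · obtain ⟨hunit, hnorm⟩ := isUnit_and_norm_inverse_hessian_le hμ hL₁.le hG hGmono hF₁
      (hI ν hν).1 (by nlinarith [hI ν hν]) (ystar ν)
    exact ⟨Ring.mul_inverse_cancel _ hunit, Ring.inverse_mul_cancel _ hunit, hnorm⟩
  · exact norm_inverse_hessian_sub_le hμ hL₀.le hL₁.le hκ₀ hκ₁ hκ₂ (hf.comp_mk2 x) hG hGmono
      (hflip x) hF₁ hG₁ (fun y z => (hHf x y x z).trans_eq (by rw [norm_mk2_sub_mk2]))
      (fun y z => (hHg x y x z).trans_eq (by rw [norm_mk2_sub_mk2]))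
      (hI ν₁ hν₁).1 (hI ν₁ hν₁).2 (hI ν₂ hν₂).1 (hI ν₂ hν₂).2 (hmin ν₁ hν₁) (hmin ν₂ hν₂)
end

section
/- Let f, g : ℝ^{d_x} × ℝ^{d_y} → ℝ be differentiable, fix x ∈ ℝ^{d_x}, and let ν ↦ y_ν*(x) be a map from ℝ to ℝ^{d_y} that is differentiable at ν₀ and satisfies the first-order condition ν₀ ∇_y f(x, y_{ν₀}*(x)) + ∇_y g(x, y_{ν₀}*(x)) = 0. Define ℓ_ν(x) := ν f(x, y_ν*(x)) + g(x, y_ν*(x)). Then ν ↦ ℓ_ν(x) is differentiable at ν₀ with derivative (d/dν) ℓ_ν(x)|_{ν=ν₀} = f(x, y_{ν₀}*(x)). In particular, if y_0*(x) minimizes g(x, ·), then (d/dν) ℓ_ν(x)|_{ν=0} = f(x, y_0*(x)) = φ(x). -/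
/-! The envelope theorem: differentiating `ν ↦ ν F(γ ν) + G(γ ν)` by the chain rule, the terms
through `γ'` combine into `⟪ν₀ ∇F + ∇G, γ'⟫`, which the first-order condition kills. -/

open InnerProductSpace

theorem HasDerivAt.mul_comp_add_comp_of_smul_add_eq_zero {E : Type*} [NormedAddCommGroup E]
    [InnerProductSpace ℝ E] [CompleteSpace E] {F G : E → ℝ} {a b γ' : E} {γ : ℝ → E} {ν₀ : ℝ}
    (hγ : HasDerivAt γ γ' ν₀) (hF : HasGradientAt F a (γ ν₀)) (hG : HasGradientAt G b (γ ν₀))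
    (hfoc : ν₀ • a + b = 0) :
    HasDerivAt (fun ν => ν * F (γ ν) + G (γ ν)) (F (γ ν₀)) ν₀ := by
  have hFγ : HasDerivAt (fun ν => F (γ ν)) ⟪a, γ'⟫_ℝ ν₀ := hF.hasFDerivAt.comp_hasDerivAt ν₀ hγ
  have hGγ : HasDerivAt (fun ν => G (γ ν)) ⟪b, γ'⟫_ℝ ν₀ := hG.hasFDerivAt.comp_hasDerivAt ν₀ hγ
  have hcancel : ν₀ * ⟪a, γ'⟫_ℝ + ⟪b, γ'⟫_ℝ = 0 := by
    rw [← real_inner_smul_left, ← inner_add_left, hfoc, inner_zero_left]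
  exact (((hasDerivAt_id ν₀).mul hFγ).add hGγ).congr_deriv (by simp only [id_eq]; linarith)

/-- derivative of the perturbed value function ℓ_ν(x) in ν equals
f(x, y_ν*(x)) at ν₀, given the first-order optimality condition at ν₀. -/
theorem stmt_13 {dx dy : ℕ}
    (f g : EuclideanSpace ℝ (Fin dx) × EuclideanSpace ℝ (Fin dy) → ℝ)
    (hf : Differentiable ℝ f) (hg : Differentiable ℝ g)
    (x : EuclideanSpace ℝ (Fin dx)) (ystar : ℝ → EuclideanSpace ℝ (Fin dy)) (ν₀ : ℝ)
    (hy : DifferentiableAt ℝ ystar ν₀)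
    (hfoc : ν₀ • gradient (fun y => f (x, y)) (ystar ν₀)
        + gradient (fun y => g (x, y)) (ystar ν₀) = 0) :
    HasDerivAt (fun ν => ν * f (x, ystar ν) + g (x, ystar ν)) (f (x, ystar ν₀)) ν₀ := by
  have hslice {h : EuclideanSpace ℝ (Fin dx) × EuclideanSpace ℝ (Fin dy) → ℝ}
      (hh : Differentiable ℝ h) : Differentiable ℝ (fun y => h (x, y)) :=
    hh.comp ((differentiable_const x).prodMk differentiable_id)
  exact hy.hasDerivAt.mul_comp_add_comp_of_smul_add_eq_zero
    ((hslice hf) _).hasGradientAt ((hslice hg) _).hasGradientAt hfoc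
end

section
/- Let f : ℝ^d → ℝ be differentiable with L-Lipschitz gradient and with finite infimum f* := inf_{x ∈ ℝ^d} f(x) > −∞. Let η > 0, let T be a positive integer, and let x₀, …, x_T ∈ ℝ^d and F₀, …, F_{T−1} ∈ ℝ^d \ {0} satisfy the normalized gradient descent update x_{t+1} = x_t − η·F_t/‖F_t‖ for t = 0, …, T−1. Then (1/T)·Σ_{t=0}^{T−1} ‖∇f(x_t)‖ ≤ 3·(f(x₀) − f*)/(η·T) + 3·L·η/2 + (8/T)·Σ_{t=0}^{T−1} ‖F_t − ∇f(x_t)‖. -/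
/-!
By the descent lemma, a step of length `η` in the direction `-F / ‖F‖` decreases `f` by at least
`η ⟪∇f x, F⟫ / ‖F‖ - L η² / 2`, and `⟪g, F⟫ / ‖F‖ ≥ ‖g‖ - 2 ‖F - g‖`. Summing over the steps
telescopes the values of `f`, and `f x_T ≥ f*`; this even gives the bound with the constants
`1`, `1 / 2`, `2` in place of `3`, `3 / 2`, `8`.
-/

open Finset Set
open scoped RealInnerProductSpace

variable {E : Type*} [NormedAddCommGroup E] [InnerProductSpace ℝ E]

theorem norm_sub_two_mul_norm_sub_le_inner_div_norm (g F : E) :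
    ‖g‖ - 2 * ‖F - g‖ ≤ ⟪g, F⟫ / ‖F‖ := by
  rcases eq_or_ne F 0 with rfl | hF
  · simp [two_mul]
  have hFpos : 0 < ‖F‖ := norm_pos_iff.mpr hF
  have hinner : ‖F‖ * (‖F‖ - ‖F - g‖) ≤ ⟪g, F⟫ := by
    have hsplit : ⟪g, F⟫ = ‖F‖ ^ 2 - ⟪F - g, F⟫ := by
      rw [inner_sub_left, real_inner_self_eq_norm_sq]; ring
    nlinarith [real_inner_le_norm (F - g) F]
  have htri : ‖g‖ ≤ ‖F‖ + ‖F - g‖ := by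
    simpa only [norm_sub_rev] using norm_le_norm_add_norm_sub' g F
  rw [le_div_iff₀ hFpos]
  nlinarith

variable [CompleteSpace E]

theorem apply_add_le_add_inner_gradient_add_sq {f : E → ℝ} {L : ℝ} (hf : Differentiable ℝ f)
    (hlip : ∀ u v, ‖gradient f u - gradient f v‖ ≤ L * ‖u - v‖) (x v : E) :
    f (x + v) ≤ f x + ⟪gradient f x, v⟫ + L / 2 * ‖v‖ ^ 2 := by
  set φ : ℝ → ℝ := fun s => f (x + s • v) - s * ⟪gradient f x, v⟫ - L / 2 * s ^ 2 * ‖v‖ ^ 2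
  have hφ : ∀ s, HasDerivAt φ
      (⟪gradient f (x + s • v) - gradient f x, v⟫ - L * s * ‖v‖ ^ 2) s := by
    intro s
    have hline : HasDerivAt (fun s : ℝ => x + s • v) v s := by
      simpa using ((hasDerivAt_id s).smul_const v).const_add x
    have hfline := (hf (x + s • v)).hasGradientAt.hasFDerivAt.comp_hasDerivAt s hline
    refine ((hfline.sub ((hasDerivAt_id s).mul_const ⟪gradient f x, v⟫)).sub
      (((hasDerivAt_pow 2 s).const_mul (L / 2)).mul_const (‖v‖ ^ 2))).congr_deriv ?_
    simp only [InnerProductSpace.toDual_apply_apply, inner_sub_left]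
    ring
  have hanti : AntitoneOn φ (Ici 0) := by
    refine antitoneOn_of_hasDerivWithinAt_nonpos (convex_Ici 0)
      (fun s _ => (hφ s).continuousAt.continuousWithinAt) (fun s _ => (hφ s).hasDerivWithinAt) ?_
    intro s hs
    rw [interior_Ici] at hs
    have hs0 : 0 ≤ s := le_of_lt hs
    have hgrad : ‖gradient f (x + s • v) - gradient f x‖ ≤ L * (s * ‖v‖) := by
      simpa [norm_smul, abs_of_nonneg hs0] using hlip (x + s • v) x
    nlinarith [real_inner_le_norm (gradient f (x + s • v) - gradient f x) v,
      mul_le_mul_of_nonneg_right hgrad (norm_nonneg v)]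
  have h01 := hanti self_mem_Ici (mem_Ici.2 zero_le_one) zero_le_one
  simp only [φ, zero_smul, one_smul, add_zero, zero_mul, one_mul, sub_zero, one_pow,
    zero_pow two_ne_zero, mul_zero] at h01
  linarith

theorem mul_norm_gradient_le_of_normalized_step {f : E → ℝ} {L η : ℝ} (hf : Differentiable ℝ f)
    (hlip : ∀ u v, ‖gradient f u - gradient f v‖ ≤ L * ‖u - v‖) (hη : 0 ≤ η) (x : E) {F : E}
    (hF : F ≠ 0) :
    η * ‖gradient f x‖
      ≤ f x - f (x - (η / ‖F‖) • F) + 2 * η * ‖F - gradient f x‖ + L * η ^ 2 / 2 := by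
  have hstep : ‖(η / ‖F‖) • F‖ = η := by
    rw [norm_smul, Real.norm_eq_abs, abs_div, abs_norm, abs_of_nonneg hη,
      div_mul_cancel₀ _ (norm_ne_zero_iff.mpr hF)]
  have hinner : ⟪gradient f x, -((η / ‖F‖) • F)⟫ = -(η * (⟪gradient f x, F⟫ / ‖F‖)) := by
    rw [inner_neg_right, real_inner_smul_right, div_mul_eq_mul_div, mul_div_assoc]
  have hdescent := apply_add_le_add_inner_gradient_add_sq hf hlip x (-((η / ‖F‖) • F))
  rw [← sub_eq_add_neg, norm_neg, hstep, hinner] at hdescent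
  have halign := mul_le_mul_of_nonneg_left
    (norm_sub_two_mul_norm_sub_le_inner_div_norm (gradient f x) F) hη
  linarith

theorem mul_sum_norm_gradient_le_of_normalized_descent {f : E → ℝ} {L η : ℝ}
    (hf : Differentiable ℝ f) (hlip : ∀ u v, ‖gradient f u - gradient f v‖ ≤ L * ‖u - v‖)
    (hη : 0 ≤ η) (x F : ℕ → E) (T : ℕ) (hF : ∀ t < T, F t ≠ 0)
    (hupd : ∀ t < T, x (t + 1) = x t - (η / ‖F t‖) • F t) :
    η * ∑ t ∈ range T, ‖gradient f (x t)‖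
      ≤ f (x 0) - f (x T) + 2 * η * ∑ t ∈ range T, ‖F t - gradient f (x t)‖
        + T * (L * η ^ 2 / 2) := by
  induction T with
  | zero => simp
  | succ T ih =>
    have hprev := ih (fun t ht => hF t (by omega)) (fun t ht => hupd t (by omega))
    have hlast := mul_norm_gradient_le_of_normalized_step hf hlip hη (x T) (hF T (by omega))
    rw [← hupd T (by omega)] at hlast
    simp only [sum_range_succ, Nat.cast_succ]
    linarith

/-- pathwise descent guarantee for normalized gradient descent with
inexact gradient directions Fv. -/
theorem stmt_19 {d : ℕ} (f : EuclideanSpace ℝ (Fin d) → ℝ) (L fstar η : ℝ) (T : ℕ)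
    (hdiff : Differentiable ℝ f)
    (hlip : ∀ u v, ‖gradient f u - gradient f v‖ ≤ L * ‖u - v‖)
    (hfs : IsGLB (Set.range f) fstar)
    (hη : 0 < η) (hT : 0 < T)
    (x Fv : ℕ → EuclideanSpace ℝ (Fin d))
    (hFne : ∀ t < T, Fv t ≠ 0)
    (hupd : ∀ t < T, x (t + 1) = x t - (η / ‖Fv t‖) • Fv t) :
    (1 / (T : ℝ)) * ∑ t ∈ Finset.range T, ‖gradient f (x t)‖
      ≤ 3 * (f (x 0) - fstar) / (η * T) + 3 * L * η / 2
        + (8 / (T : ℝ)) * ∑ t ∈ Finset.range T, ‖Fv t - gradient f (x t)‖ := by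
  have hL : 0 ≤ L := by
    have h := hlip (x 1) (x 0)
    rw [hupd 0 hT, sub_sub_cancel_left, norm_neg, norm_smul, Real.norm_eq_abs, abs_div,
      abs_norm, abs_of_pos hη, div_mul_cancel₀ _ (norm_ne_zero_iff.mpr (hFne 0 hT))] at h
    exact nonneg_of_mul_nonneg_left ((norm_nonneg _).trans h) hη
  have hsum := mul_sum_norm_gradient_le_of_normalized_descent hdiff hlip hη.le x Fv T hFne hupd
  have hgap : 0 ≤ f (x 0) - fstar := sub_nonneg.mpr (hfs.1 ⟨x 0, rfl⟩)
  have hlast : fstar ≤ f (x T) := hfs.1 ⟨x T, rfl⟩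
  set S := ∑ t ∈ Finset.range T, ‖gradient f (x t)‖
  set Err := ∑ t ∈ Finset.range T, ‖Fv t - gradient f (x t)‖
  have hErr : 0 ≤ Err := sum_nonneg fun _ _ => norm_nonneg _
  have hT' : (0 : ℝ) < T := by exact_mod_cast hT
  calc 1 / (T : ℝ) * S = η * S / (η * T) := by field_simp
    _ ≤ (f (x 0) - fstar + 2 * η * Err + T * (L * η ^ 2 / 2)) / (η * T) := by gcongr; linarith
    _ = (f (x 0) - fstar) / (η * T) + L * η / 2 + 2 / T * Err := by field_simp; ring
    _ ≤ 3 * (f (x 0) - fstar) / (η * T) + 3 * L * η / 2 + 8 / T * Err := by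
      gcongr ?_ + ?_ + ?_
      · gcongr; linarith
      · gcongr; nlinarith [mul_nonneg hL hη.le]
      · gcongr; norm_num
end
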